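/- arXiv:1912.11880 — 2 statements merged into one kernel-verified Lean document; each statement's English description precedes it below -/
import Mathlib

section
/- Let f̂ : [τ₀,τ₁] × Ω → ℝᵏ be measurable in time and Lipschitz in the state variable with time-dependent Lipschitz constant φ(τ) ≥ 1 integrable, let t(τ) = t₀ + ∫_{τ₀}^τ φ(s)ds with inverse τ(t), and define ĝ(t, y) := φ(τ(t))⁻¹ f̂(τ(t), y). Then ∫_{t₀}^{t(τ₁)} ĝ(s, y) ds = ∫_{τ₀}^{τ₁} f̂(s, y) ds for every fixed y, and ĝ(t, ·) is Lipschitz with constant at most 1 for a.e. t. -/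
/-!
The new time `t` is a primitive of the integrable function `φ ≥ 1`, so by the Lebesgue
differentiation theorem it has derivative `φ` on a measurable set `E` of full measure in
`[τ₀, τ₁]`, on which the Lipschitz bound for `f̂` holds as well. As `t` is monotone, the change of
variables formula on `E` gives `volume (t '' E) = ∫_E φ = t τ₁ - t₀`, so `t '' E` has full measure
in `[t₀, t τ₁]`. The same formula applied to `ĝ(·, y)` gives the equality of the integrals, and at
`s = t τ` with `τ ∈ E` the map `ĝ(s, ·) = φ(τ)⁻¹ f̂(τ, ·)` is `1`-Lipschitz.
-/

open MeasureTheory Set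

section Primitive

variable {φ T : ℝ → ℝ} {a b : ℝ}

theorem monotoneOn_of_eq_add_intervalIntegral (hφ : IntegrableOn φ (Icc a b))
    (hφ0 : ∀ᵐ x ∂volume.restrict (Icc a b), 0 ≤ φ x)
    (hT : ∀ x ∈ Icc a b, T x = T a + ∫ s in a..x, φ s) : MonotoneOn T (Icc a b) := by
  intro x hx y hy hxy
  have hii : ∀ z ∈ Icc a b, IntervalIntegrable φ volume a z := fun z hz =>
    (hφ.mono_set (uIcc_subset_Icc ⟨le_rfl, hz.1.trans hz.2⟩ hz)).intervalIntegrable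
  have hdiff : T y - T x = ∫ s in x..y, φ s := by
    rw [hT x hx, hT y hy, ← intervalIntegral.integral_interval_sub_left (hii y hy) (hii x hx)]
    ring
  have hnonneg : 0 ≤ ∫ s in x..y, φ s :=
    intervalIntegral.integral_nonneg_of_ae_restrict hxy
      (ae_restrict_of_ae_restrict_of_subset (Icc_subset_Icc hx.1 hy.2) hφ0)
  linarith

theorem exists_ae_eq_Icc_hasDerivWithinAt_of_eq_add_intervalIntegral {P : ℝ → Prop}
    (hab : a ≤ b) (hφ : IntegrableOn φ (Icc a b))
    (hT : ∀ x ∈ Icc a b, T x = T a + ∫ s in a..x, φ s)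
    (hP : ∀ᵐ x ∂volume.restrict (Icc a b), P x) :
    ∃ E ⊆ Icc a b, MeasurableSet E ∧ E =ᵐ[volume] Icc a b ∧
      ∀ x ∈ E, P x ∧ HasDerivWithinAt T (φ x) E x := by
  have hQ : ∀ᵐ x, x ∈ Icc a b →
      P x ∧ HasDerivAt (fun y => ∫ s in a..y, φ s) (φ x) x := by
    filter_upwards [(ae_restrict_iff' measurableSet_Icc).1 hP,
      (intervalIntegrable_iff_integrableOn_Icc_of_le hab).2 hφ |>.ae_hasDerivAt_integral]
      with x hPx hDx hx
    rw [uIcc_of_le hab] at hDx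
    exact ⟨hPx hx, hDx hx a (left_mem_Icc.2 hab)⟩
  obtain ⟨S, hSae, hSm, hS⟩ := hQ.exists_measurable_mem
  refine ⟨S ∩ Icc a b, inter_subset_right, hSm.inter measurableSet_Icc,
    inter_ae_eq_right_of_ae_eq_univ (ae_eq_univ.2 (mem_ae_iff.1 hSae)), fun x hx => ?_⟩
  obtain ⟨hPx, hDx⟩ := hS x hx.1 hx.2
  exact ⟨hPx, ((hDx.const_add (T a)).hasDerivWithinAt).congr (fun y hy => hT y hy.2) (hT x hx.2)⟩

theorem image_ae_eq_Icc_of_hasDerivWithinAt (hab : a ≤ b) (hφ : IntegrableOn φ (Icc a b))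
    (hφ0 : ∀ᵐ x ∂volume.restrict (Icc a b), 0 ≤ φ x)
    (hT : ∀ x ∈ Icc a b, T x = T a + ∫ s in a..x, φ s) {E : Set ℝ} (hEsub : E ⊆ Icc a b)
    (hEm : MeasurableSet E) (hE : E =ᵐ[volume] Icc a b)
    (hderiv : ∀ x ∈ E, HasDerivWithinAt T (φ x) E x) :
    T '' E =ᵐ[volume] Icc (T a) (T b) := by
  have hmono := monotoneOn_of_eq_add_intervalIntegral hφ hφ0 hT
  have hsub : T '' E ⊆ Icc (T a) (T b) := by
    rintro _ ⟨x, hx, rfl⟩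
    exact ⟨hmono (left_mem_Icc.2 hab) (hEsub hx) (hEsub hx).1,
      hmono (hEsub hx) (right_mem_Icc.2 hab) (hEsub hx).2⟩
  have hvol : volume (T '' E) = ENNReal.ofReal (T b - T a) := by
    rw [← lintegral_deriv_eq_volume_image_of_monotoneOn hEm hderiv (hmono.mono hEsub),
      setLIntegral_congr hE, ← ofReal_integral_eq_lintegral_ofReal hφ hφ0,
      integral_Icc_eq_integral_Ioc, ← intervalIntegral.integral_of_le hab,
      hT b (right_mem_Icc.2 hab), add_sub_cancel_left]
  refine ae_eq_of_subset_of_measure_ge hsub ?_ (hEm.image_of_monotoneOn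
    (hmono.mono hEsub)).nullMeasurableSet measure_Icc_lt_top.ne
  rw [hvol, Real.volume_Icc]

theorem integral_comp_smul_of_eq_add_intervalIntegral {F : Type*} [NormedAddCommGroup F]
    [NormedSpace ℝ F] (hab : a ≤ b) (hφ : IntegrableOn φ (Icc a b))
    (hφ0 : ∀ᵐ x ∂volume.restrict (Icc a b), 0 ≤ φ x)
    (hT : ∀ x ∈ Icc a b, T x = T a + ∫ s in a..x, φ s) (G : ℝ → F) :
    ∫ u in T a..T b, G u = ∫ x in a..b, φ x • G (T x) := by
  obtain ⟨E, hEsub, hEm, hEae, hE⟩ :=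
    exists_ae_eq_Icc_hasDerivWithinAt_of_eq_add_intervalIntegral (P := fun _ => True) hab hφ hT
      (ae_of_all _ fun _ => trivial)
  have hderiv : ∀ x ∈ E, HasDerivWithinAt T (φ x) E x := fun x hx => (hE x hx).2
  have hmono := monotoneOn_of_eq_add_intervalIntegral hφ hφ0 hT
  have hIm := image_ae_eq_Icc_of_hasDerivWithinAt hab hφ hφ0 hT hEsub hEm hEae hderiv
  rw [intervalIntegral.integral_of_le (hmono (left_mem_Icc.2 hab) (right_mem_Icc.2 hab) hab),
    intervalIntegral.integral_of_le hab, ← integral_Icc_eq_integral_Ioc,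
    ← integral_Icc_eq_integral_Ioc,
    ← setIntegral_congr_set hIm,
    integral_image_eq_integral_deriv_smul_of_monotoneOn hEm hderiv (hmono.mono hEsub),
    setIntegral_congr_set hEae]

theorem ae_exists_eq_of_eq_add_intervalIntegral {P : ℝ → Prop} (hab : a ≤ b)
    (hφ : IntegrableOn φ (Icc a b)) (hφ0 : ∀ᵐ x ∂volume.restrict (Icc a b), 0 ≤ φ x)
    (hT : ∀ x ∈ Icc a b, T x = T a + ∫ s in a..x, φ s)
    (hP : ∀ᵐ x ∂volume.restrict (Icc a b), P x) :
    ∀ᵐ u ∂volume.restrict (Icc (T a) (T b)), ∃ x ∈ Icc a b, P x ∧ T x = u := by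
  obtain ⟨E, hEsub, hEm, hEae, hE⟩ :=
    exists_ae_eq_Icc_hasDerivWithinAt_of_eq_add_intervalIntegral hab hφ hT hP
  have hIm := image_ae_eq_Icc_of_hasDerivWithinAt hab hφ hφ0 hT hEsub hEm hEae
    fun x hx => (hE x hx).2
  refine (ae_restrict_iff' measurableSet_Icc).2 (hIm.mono fun u hu hmem => ?_)
  obtain ⟨x, hx, rfl⟩ : u ∈ T '' E := hu.mpr hmem
  exact ⟨x, hEsub hx, (hE x hx).1, rfl⟩

end Primitive

theorem stmt7_general (m k : ℕ) (τ₀ τ₁ t₀ : ℝ) (h : τ₀ ≤ τ₁) (φ : ℝ → ℝ)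
    (hint : IntegrableOn φ (Icc τ₀ τ₁))
    (hφ1 : ∀ᵐ s ∂(volume.restrict (Icc τ₀ τ₁)), 1 ≤ φ s)
    (f : ℝ → EuclideanSpace ℝ (Fin m) → EuclideanSpace ℝ (Fin k))
    (hLip : ∀ᵐ τ ∂(volume.restrict (Icc τ₀ τ₁)),
      ∀ y y', ‖f τ y - f τ y'‖ ≤ φ τ * ‖y - y'‖)
    (t : ℝ → ℝ) (ht : ∀ τ, t τ = t₀ + ∫ s in τ₀..τ, φ s)
    (τinv : ℝ → ℝ)
    (hinv₁ : ∀ τ ∈ Icc τ₀ τ₁, τinv (t τ) = τ)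
    (g : ℝ → EuclideanSpace ℝ (Fin m) → EuclideanSpace ℝ (Fin k))
    (hg : ∀ s y, g s y = (φ (τinv s))⁻¹ • f (τinv s) y) :
    (∀ y, ∫ s in t₀..(t τ₁), g s y = ∫ s in τ₀..τ₁, f s y) ∧
      ∀ᵐ s ∂(volume.restrict (Icc t₀ (t τ₁))),
        ∀ y y', ‖g s y - g s y'‖ ≤ ‖y - y'‖ := by
  have ht₀ : t τ₀ = t₀ := by simp [ht]
  have hT : ∀ x ∈ Icc τ₀ τ₁, t x = t τ₀ + ∫ s in τ₀..x, φ s := fun x _ => by rw [ht₀, ht]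
  have hφ0 : ∀ᵐ s ∂volume.restrict (Icc τ₀ τ₁), 0 ≤ φ s :=
    hφ1.mono fun s hs => zero_le_one.trans hs
  have hgt : ∀ x ∈ Icc τ₀ τ₁, ∀ y, g (t x) y = (φ x)⁻¹ • f x y := fun x hx y => by
    rw [hg, hinv₁ x hx]
  rw [← ht₀]
  refine ⟨fun y => ?_, ?_⟩
  · rw [integral_comp_smul_of_eq_add_intervalIntegral h hint hφ0 hT]
    refine intervalIntegral.integral_congr_ae ?_
    filter_upwards [(ae_restrict_iff' measurableSet_Icc).1 hφ1] with x hφx hxIoc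
    rw [uIoc_of_le h] at hxIoc
    have hx := Ioc_subset_Icc_self hxIoc
    rw [hgt x hx, smul_inv_smul₀ (zero_lt_one.trans_le (hφx hx)).ne']
  · filter_upwards [ae_exists_eq_of_eq_add_intervalIntegral h hint hφ0 hT (hφ1.and hLip)]
      with s ⟨x, hx, ⟨hφx, hLx⟩, hxs⟩ y y'
    have hpos : 0 < φ x := zero_lt_one.trans_le hφx
    rw [← hxs, hgt x hx, hgt x hx, ← smul_sub, norm_smul, norm_inv,
      Real.norm_of_nonneg hpos.le, inv_mul_le_iff₀ hpos]
    exact hLx y y'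

/-- change of time variable.  If `f̂(τ,·)` is Lipschitz with
time-dependent constant `φ(τ) ≥ 1` and `ĝ(t,y) := φ(τ(t))⁻¹ f̂(τ(t),y)`, then
the time integrals of `ĝ` and `f̂` agree and `ĝ(t,·)` is `1`-Lipschitz a.e. -/
theorem stmt7 (m k : ℕ) (τ₀ τ₁ t₀ : ℝ) (h : τ₀ ≤ τ₁) (φ : ℝ → ℝ)
    (hint : IntegrableOn φ (Icc τ₀ τ₁))
    (hφ1 : ∀ᵐ s ∂(volume.restrict (Icc τ₀ τ₁)), 1 ≤ φ s)
    (f : ℝ → EuclideanSpace ℝ (Fin m) → EuclideanSpace ℝ (Fin k))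
    (hmeas : ∀ y, AEStronglyMeasurable (fun τ => f τ y) (volume.restrict (Icc τ₀ τ₁)))
    (hLip : ∀ᵐ τ ∂(volume.restrict (Icc τ₀ τ₁)),
      ∀ y y', ‖f τ y - f τ y'‖ ≤ φ τ * ‖y - y'‖)
    (t : ℝ → ℝ) (ht : ∀ τ, t τ = t₀ + ∫ s in τ₀..τ, φ s)
    (τinv : ℝ → ℝ)
    (hinv₁ : ∀ τ ∈ Icc τ₀ τ₁, τinv (t τ) = τ)
    (hinv₂ : ∀ s ∈ Icc t₀ (t τ₁), t (τinv s) = s ∧ τinv s ∈ Icc τ₀ τ₁)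
    (g : ℝ → EuclideanSpace ℝ (Fin m) → EuclideanSpace ℝ (Fin k))
    (hg : ∀ s y, g s y = (φ (τinv s))⁻¹ • f (τinv s) y) :
    (∀ y, ∫ s in t₀..(t τ₁), g s y = ∫ s in τ₀..τ₁, f s y) ∧
      ∀ᵐ s ∂(volume.restrict (Icc t₀ (t τ₁))),
        ∀ y y', ‖g s y - g s y'‖ ≤ ‖y - y'‖ :=
  stmt7_general m k τ₀ τ₁ t₀ h φ hint hφ1 f hLip t ht τinv hinv₁ g hg
end

section
/- Let H : [t₀,t₁] × U → ℝ be integrable in t for each u and continuous in u for a.e. t, where U is a compact metric space, and let (uₖ) be a countable family of measurable controls uₖ : [t₀,t₁] → U such that {uₖ(t) : k ∈ ℕ} is dense in U(t) for a.e. t. Suppose that for each k there is a null set Z_k with H(t, uₖ(t)) − m(t) ≥ 0 for all t ∉ Z_k, where m(t) := ∫ H(t,u) σ̄(t)(du) for a measurable family of probability measures σ̄(t) supported on U(t). Then for a.e. t ∈ [t₀,t₁], m(t) = inf_k H(t, uₖ(t)) = min_{u ∈ U(t)} H(t, u). -/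
/-!
Fix a good time `t`. Since `m(t) ≤ H(t, uₖ(t))` for every `k`, the closed set `{m(t) ≤ H(t, ·)}`
contains the dense family and hence all of `U(t)`. So `H(t, ·) - m(t)` is `σ̄(t)`-a.e. nonnegative
with zero integral, hence vanishes `σ̄(t)`-a.e.; as `σ̄(t)` charges `U(t)`, the value `m(t)` is
attained on `U(t)`, and approximating a minimiser by the family identifies `m(t)` with the infimum.
-/

open MeasureTheory Set

theorem le_of_forall_le_of_subset_closure_range {X ι : Type*} [TopologicalSpace X]
    {f : X → ℝ} (hf : Continuous f) {v : ι → X} {s : Set X} (hs : s ⊆ closure (range v))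
    {c : ℝ} (hc : ∀ k, c ≤ f (v k)) : ∀ y ∈ s, c ≤ f y := by
  have hrange : range v ⊆ {y | c ≤ f y} := by
    rintro _ ⟨k, rfl⟩
    exact hc k
  exact fun y hy => closure_minimal hrange (isClosed_le continuous_const hf) (hs hy)

theorem ae_eq_integral_of_integral_le_ae {α : Type*} [MeasurableSpace α] {μ : Measure α}
    [IsProbabilityMeasure μ] {f : α → ℝ} (hf : Integrable f μ)
    (hle : ∀ᵐ u ∂μ, ∫ x, f x ∂μ ≤ f u) : ∀ᵐ u ∂μ, f u = ∫ x, f x ∂μ := by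
  have h := (integral_eq_iff_of_ae_le (integrable_const (∫ x, f x ∂μ)) hf hle).1 (by simp)
  filter_upwards [h] with u hu
  exact hu.symm

theorem integral_eq_iInf_and_exists_minimizer {X : Type*} [TopologicalSpace X] [MeasurableSpace X]
    {μ : Measure X} [IsProbabilityMeasure μ] {s : Set X} (hs : MeasurableSet s) (hμs : μ s = 1)
    {f : X → ℝ} (hf : Continuous f) (hfi : Integrable f μ) {v : ℕ → X}
    (hdense : s ⊆ closure (range v)) (hmin : ∀ k, ∫ x, f x ∂μ ≤ f (v k)) :
    ∫ x, f x ∂μ = ⨅ k, f (v k) ∧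
      ∃ x ∈ s, f x = ∫ x, f x ∂μ ∧ ∀ y ∈ s, ∫ x, f x ∂μ ≤ f y := by
  have hge := le_of_forall_le_of_subset_closure_range hf hdense hmin
  have hae_mem : ∀ᵐ u ∂μ, u ∈ s :=
    (ae_mem_iff_measure_eq hs.nullMeasurableSet).2 (by rw [hμs, measure_univ])
  have hae_eq := ae_eq_integral_of_integral_le_ae hfi (hae_mem.mono hge)
  obtain ⟨x, hxs, hx⟩ := (hae_mem.and hae_eq).exists
  have hbdd : BddBelow (range fun k => f (v k)) := ⟨_, forall_mem_range.2 hmin⟩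
  have hiInf_le : ⨅ k, f (v k) ≤ f x :=
    le_of_forall_le_of_subset_closure_range hf hdense (ciInf_le hbdd) x hxs
  exact ⟨le_antisymm (le_ciInf hmin) (hx ▸ hiInf_le), x, hxs, hx, hge⟩

theorem stmt15_general {U : Type*} [MetricSpace U]
    [MeasurableSpace U] [BorelSpace U]
    (t₀ t₁ : ℝ)
    (Uset : ℝ → Set U) (hUc : ∀ t, IsCompact (Uset t))
    (σ : ℝ → Measure U) [∀ t, IsProbabilityMeasure (σ t)]
    (hσ : ∀ᵐ t ∂(volume.restrict (Icc t₀ t₁)), σ t (Uset t) = 1)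
    (H : ℝ → U → ℝ)
    (hHu : ∀ᵐ t ∂(volume.restrict (Icc t₀ t₁)), Continuous (H t))
    (hHσ : ∀ᵐ t ∂(volume.restrict (Icc t₀ t₁)), Integrable (H t) (σ t))
    (m : ℝ → ℝ) (hm : ∀ t, m t = ∫ u, H t u ∂(σ t))
    (uk : ℕ → ℝ → U)
    (hdense : ∀ᵐ t ∂(volume.restrict (Icc t₀ t₁)),
      Uset t ⊆ closure (Set.range fun k => uk k t))
    (hmin : ∀ k, ∀ᵐ t ∂(volume.restrict (Icc t₀ t₁)), m t ≤ H t (uk k t)) :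
    ∀ᵐ t ∂(volume.restrict (Icc t₀ t₁)),
      m t = ⨅ k, H t (uk k t) ∧
        ∃ x ∈ Uset t, H t x = m t ∧ ∀ y ∈ Uset t, m t ≤ H t y := by
  obtain rfl : m = fun t => ∫ u, H t u ∂(σ t) := funext hm
  filter_upwards [hσ, hHu, hHσ, hdense, ae_all_iff.2 hmin] with t hσt hcont hint hdt hmint
  exact integral_eq_iInf_and_exists_minimizer (hUc t).isClosed.measurableSet hσt hcont hint hdt hmint

/-- Step 4 of Theorem 9.2 (pointwise Pontryagin minimum
condition): if `m(t) ≤ H(t, uₖ(t))` outside null sets for a countable dense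
family of controls, then a.e. `m(t)` equals the infimum over the family and the
minimum of `H(t,·)` over `U(t)` (which is attained). -/
theorem stmt15 {U : Type*} [MetricSpace U] [CompactSpace U]
    [MeasurableSpace U] [BorelSpace U]
    (t₀ t₁ : ℝ) (h : t₀ ≤ t₁)
    (Uset : ℝ → Set U) (hUc : ∀ t, IsCompact (Uset t)) (hUne : ∀ t, (Uset t).Nonempty)
    (σ : ℝ → Measure U) [∀ t, IsProbabilityMeasure (σ t)]
    (hσ : ∀ᵐ t ∂(volume.restrict (Icc t₀ t₁)), σ t (Uset t) = 1)
    (H : ℝ → U → ℝ)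
    (hHt : ∀ u, IntegrableOn (fun t => H t u) (Icc t₀ t₁))
    (hHu : ∀ᵐ t ∂(volume.restrict (Icc t₀ t₁)), Continuous (H t))
    (hHσ : ∀ᵐ t ∂(volume.restrict (Icc t₀ t₁)), Integrable (H t) (σ t))
    (m : ℝ → ℝ) (hm : ∀ t, m t = ∫ u, H t u ∂(σ t))
    (uk : ℕ → ℝ → U) (hukmeas : ∀ k, Measurable (uk k))
    (hukmem : ∀ᵐ t ∂(volume.restrict (Icc t₀ t₁)), ∀ k, uk k t ∈ Uset t)
    (hdense : ∀ᵐ t ∂(volume.restrict (Icc t₀ t₁)),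
      Uset t ⊆ closure (Set.range fun k => uk k t))
    (hmin : ∀ k, ∀ᵐ t ∂(volume.restrict (Icc t₀ t₁)), m t ≤ H t (uk k t)) :
    ∀ᵐ t ∂(volume.restrict (Icc t₀ t₁)),
      m t = ⨅ k, H t (uk k t) ∧
        ∃ x ∈ Uset t, H t x = m t ∧ ∀ y ∈ Uset t, m t ≤ H t y :=
  stmt15_general t₀ t₁ Uset hUc σ hσ H hHu hHσ m hm uk hdense hmin
end
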